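/- Let p > 2 be prime and suppose N_p = (2^p + 1)/3 is prime. Define s_0 = 4, s_{k+1} = s_k² − 2. Then N_p divides s_{p−1} − 5 − 9·(p/3), where (p/3) is the Legendre symbol of p mod 3. -/

import Mathlib

/-!
Work in `X N = 𝔽_N[√3]` with `N = (2^p + 1)/3`, where `s_k = ω^(2^k) + ω̄^(2^k)` for
`ω = 2 + √3`. Put `E = 2^(p-1)`, so `3N = 2E + 1`. Since `(1 + √3)² = 2ω`, we get
`(1 + √3)^(3N) = 2^E ω^E (1 + √3)`, while Frobenius and Euler's criterion give
`(1 + √3)^N = 1 + ε√3` with `ε = (3/N)`. Also `2^E = 2^N · 2^(N/2) = -2`, because `N ≡ 3 mod 8`.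
Solving for `ω^E` gives `4ω^E = (1 + ε√3)³(1 - √3)`; adding the conjugate gives
`4 s_{p-1} = 20 - 36ε`, and `ε = -(p/3)` by quadratic reciprocity, since `N ≡ p mod 3`.
-/

def lucasLehmerSeq : ℕ → ℤ
  | 0 => 4
  | k + 1 => lucasLehmerSeq k ^ 2 - 2

def wagstaff (n : ℕ) : ℕ := (2 ^ n + 1) / 3

theorem three_mul_wagstaff {n : ℕ} (hn : Odd n) : 3 * wagstaff n = 2 ^ n + 1 :=
  Nat.mul_div_cancel' (by simpa using hn.nat_add_dvd_pow_add_pow 2 1)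

theorem wagstaff_mod_eight {n : ℕ} (hn : Odd n) (h3 : 3 ≤ n) : wagstaff n % 8 = 3 := by
  have h := three_mul_wagstaff hn
  have h8 : 2 ^ n = 8 * 2 ^ (n - 3) := by
    rw [show 8 = 2 ^ 3 by rfl, ← pow_add, Nat.add_sub_cancel' h3]
  omega

theorem wagstaff_mod_three {n : ℕ} (hn : Odd n) : wagstaff n % 3 = n % 3 := by
  obtain ⟨k, rfl⟩ := hn
  induction k with
  | zero => rfl
  | succ k ih =>
    have h := three_mul_wagstaff (n := 2 * k + 1) ⟨k, rfl⟩
    have h' := three_mul_wagstaff (n := 2 * (k + 1) + 1) ⟨k + 1, rfl⟩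
    rw [show 2 * (k + 1) + 1 = 2 * k + 1 + 2 by ring] at h' ⊢
    rw [pow_add] at h'
    generalize 2 ^ (2 * k + 1) = m at h h'
    omega

theorem legendreSym_wagstaff_two {n : ℕ} [Fact (wagstaff n).Prime] (hn : Odd n) (h3 : 3 ≤ n) :
    legendreSym (wagstaff n) 2 = -1 := by
  have := wagstaff_mod_eight hn h3
  rw [legendreSym.at_two (by omega), ZMod.χ₈_nat_eq_if_mod_eight]
  simp only [this]
  omega

theorem legendreSym_wagstaff_three {n : ℕ} [Fact (wagstaff n).Prime] (hn : Odd n) (h3 : 3 ≤ n) :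
    legendreSym (wagstaff n) 3 = -legendreSym 3 n := by
  have := Fact.mk Nat.prime_three
  rw [(by rfl : (3 : ℤ) = (3 : ℕ)), legendreSym.quadratic_reciprocity_three_mod_four (by norm_num)
    (by have := wagstaff_mod_eight hn h3; omega), legendreSym.mod, legendreSym.mod 3 n]
  rw_mod_cast [wagstaff_mod_three hn]

section CharP

variable {R : Type*} [CommRing R] {N : ℕ} [Fact N.Prime] [CharP R N]

theorem intCast_pow_char (a : ℤ) : (a : R) ^ N = a := by
  rw [← map_intCast (ZMod.castHom dvd_rfl R), ← map_pow, ZMod.pow_card]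

theorem intCast_legendreSym (a : ℤ) : ((legendreSym N a : ℤ) : R) = (a : R) ^ (N / 2) := by
  rw [← map_intCast (ZMod.castHom dvd_rfl R), legendreSym.eq_pow, map_pow, map_intCast]

variable (hN : N ≠ 2)
include hN

theorem intCast_legendreSym_sq_mul_self (a : ℤ) : (legendreSym N a : R) ^ 2 * a = a := by
  have hodd := (Fact.out : N.Prime).odd_of_ne_two hN
  rw [intCast_legendreSym, ← pow_mul, ← pow_succ, show N / 2 * 2 + 1 = N by grind,
    intCast_pow_char]

theorem pow_char_eq_legendreSym_mul {a : ℤ} {μ : R} (hμ : μ ^ 2 = a) :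
    μ ^ N = legendreSym N a * μ := by
  have hodd := (Fact.out : N.Prime).odd_of_ne_two hN
  rw [intCast_legendreSym, ← hμ, ← pow_mul, ← pow_succ, show 2 * (N / 2) + 1 = N by grind]

theorem one_add_pow_char_eq {a : ℤ} {μ : R} (hμ : μ ^ 2 = a) :
    (1 + μ) ^ N = 1 + legendreSym N a * μ := by
  rw [add_pow_char, one_pow, pow_char_eq_legendreSym_mul hN hμ]

omit hN

theorem two_pow_char_add_half (h2 : legendreSym N 2 = -1) : (2 : R) ^ (N + N / 2) = -2 := by
  have h := intCast_legendreSym (R := R) (N := N) 2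
  rw [h2] at h
  push_cast at h
  rw [pow_add, ← h, show (2 : R) = ((2 : ℤ) : R) by norm_num, intCast_pow_char]
  push_cast
  ring

theorem four_mul_two_add_pow (h2 : legendreSym N 2 = -1) {E : ℕ} (hE : 2 * E + 1 = 3 * N) {μ : R}
    (hμ : μ ^ 2 = 3) : 4 * (2 + μ) ^ E = (1 + legendreSym N 3 * μ) ^ 3 * (1 - μ) := by
  have h2E : (2 : R) ^ E = -2 := by
    rw [show E = N + N / 2 by omega]
    exact two_pow_char_add_half h2
  have hfrob : (1 + μ) ^ (2 * E + 1) = (1 + legendreSym N 3 * μ) ^ 3 := by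
    rw [hE, mul_comm, pow_mul, one_add_pow_char_eq (by omega) (a := 3) (by exact_mod_cast hμ)]
  have hsq : (1 + μ) ^ (2 * E + 1) = -2 * (2 + μ) ^ E * (1 + μ) := by
    rw [pow_succ, pow_mul, show (1 + μ) ^ 2 = 2 * (2 + μ) by linear_combination hμ, mul_pow, h2E]
  linear_combination (μ - 1) * (hfrob.symm.trans hsq) - 2 * (2 + μ) ^ E * hμ

theorem four_mul_trace (h2 : legendreSym N 2 = -1) {E : ℕ} (hE : 2 * E + 1 = 3 * N) {μ : R}
    (hμ : μ ^ 2 = 3) : 4 * ((2 + μ) ^ E + (2 - μ) ^ E) = 20 - 36 * legendreSym N 3 := by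
  have hplus := four_mul_two_add_pow h2 hE hμ
  have hminus := four_mul_two_add_pow h2 hE (μ := -μ) (by rw [neg_sq, hμ])
  rw [← sub_eq_add_neg] at hminus
  -- `ε ^ 2 * 3 = 3` instead of `ε ^ 2 = 1`, so that `N = 3` (where `ε = 0`) needs no separate case
  have hε := intCast_legendreSym_sq_mul_self (R := R) (by omega) 3
  set ε : R := (legendreSym N 3 : R)
  push_cast at hε
  linear_combination
    hplus + hminus + (6 * ε ^ 2 - 6 * ε - 2 * ε ^ 3 * (μ ^ 2 + 3)) * hμ - 6 * (ε - 1) * hε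

end CharP

theorem lucasLehmerSeq_eq_s (k : ℕ) : lucasLehmerSeq k = LucasLehmer.s k := by
  induction k with
  | zero => rfl
  | succ k ih => rw [lucasLehmerSeq, LucasLehmer.s, ih]

namespace LucasLehmer.X

theorem ω_eq_two_add_α {q : ℕ} : (ω : X q) = 2 + α := by
  ext <;> simp only [add_fst, add_snd, ofNat_fst, ofNat_snd] <;> simp [ω, α]

theorem ωb_eq_two_sub_α {q : ℕ} : (ωb : X q) = 2 - α := by
  ext <;> simp only [sub_eq_add_neg, add_fst, add_snd, neg_fst, neg_snd, ofNat_fst, ofNat_snd] <;>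
    simp [ωb, α]

theorem four_mul_s_sub_one_wagstaff {p : ℕ} [Fact (wagstaff p).Prime] (hp : Odd p) (h3 : 3 ≤ p) :
    (4 * s (p - 1) : X (wagstaff p)) = 20 + 36 * legendreSym 3 p := by
  have hE : 2 * 2 ^ (p - 1) + 1 = 3 * wagstaff p := by
    rw [three_mul_wagstaff hp, ← pow_succ', Nat.sub_add_cancel (by omega)]
  rw [closed_form, ω_eq_two_add_α, ωb_eq_two_sub_α,
    four_mul_trace (legendreSym_wagstaff_two hp h3) hE α_sq, legendreSym_wagstaff_three hp h3]
  push_cast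
  ring

end LucasLehmer.X

theorem wagstaff_lucas_lehmer (p : ℕ) (hp : p.Prime) (hp2 : 2 < p)
    (hN : Nat.Prime ((2 ^ p + 1) / 3)) :
    (((2 ^ p + 1) / 3 : ℕ) : ℤ) ∣
      lucasLehmerSeq (p - 1) - 5 - 9 * legendreSym 3 p := by
  have hodd : Odd p := hp.odd_of_ne_two hp2.ne'
  have : Fact (wagstaff p).Prime := ⟨hN⟩
  have key : ((4 * (lucasLehmerSeq (p - 1) - 5 - 9 * legendreSym 3 p) : ℤ) :
      LucasLehmer.X (wagstaff p)) = 0 := by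
    push_cast
    rw [lucasLehmerSeq_eq_s]
    linear_combination LucasLehmer.X.four_mul_s_sub_one_wagstaff hodd hp2
  rw [CharP.intCast_eq_zero_iff _ (wagstaff p)] at key
  have hcop : IsCoprime (wagstaff p : ℤ) 4 := by
    rw [show (4 : ℤ) = (4 : ℕ) by rfl, Nat.isCoprime_iff_coprime]
    exact Nat.Coprime.pow_right 2 <| Nat.coprime_two_right.mpr <|
      Nat.odd_iff.mpr (by have := wagstaff_mod_eight hodd hp2; omega)
  exact hcop.dvd_of_dvd_mul_left key
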